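/- arXiv:1608.02177 — 2 statements merged into one kernel-verified Lean document; each statement's English description precedes it below -/
import Mathlib

section
/- If there exists n ∈ D_{d,c} with n ≥ 3, then D_{d,c} is infinite. -/
/-- `W d c n = φ^n(0)` where `φ(x) = x^d + c`. -/
def W (d : ℕ) (c : ℤ) (n : ℕ) : ℤ := (fun x : ℤ => x ^ d + c)^[n] 0

/-- `D_{d,c} = {n : n ≥ 1 and n ∣ W_n}`. -/
def Dset (d : ℕ) (c : ℤ) : Set ℕ := {n | 1 ≤ n ∧ (n : ℤ) ∣ W d c n}

/-- `P_{d,c}` is the set of primes in `D_{d,c}`. -/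
def Pset (d : ℕ) (c : ℤ) : Set ℕ := {p ∈ Dset d c | p.Prime}

lemma W_zero' (d : ℕ) (c : ℤ) : W d c 0 = 0 := rfl

lemma W_succ (d : ℕ) (c : ℤ) (n : ℕ) : W d c (n+1) = (W d c n)^d + c := by
  simp [W, Function.iterate_succ_apply']

lemma W_one (d : ℕ) (c : ℤ) (hd : 2 ≤ d) : W d c 1 = c := by
  rw [W_succ, W_zero', zero_pow (by omega : d ≠ 0), zero_add]

lemma W_two (d : ℕ) (c : ℤ) : W d c 2 = (W d c 1)^d + c := W_succ d c 1

lemma W_add (d : ℕ) (c : ℤ) (m n : ℕ) :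
    W d c (m + n) = (fun x : ℤ => x ^ d + c)^[m] (W d c n) := by
  simp [W, Function.iterate_add_apply]

lemma iter_sub_dvd (d : ℕ) (c : ℤ) (s : ℕ) (x y : ℤ) :
    (x - y) ∣ ((fun x : ℤ => x ^ d + c)^[s] x - (fun x : ℤ => x ^ d + c)^[s] y) := by
  induction s with
  | zero => simp
  | succ s ih =>
      rw [Function.iterate_succ_apply', Function.iterate_succ_apply']
      have h2 : ((fun x : ℤ => x ^ d + c)^[s] x - (fun x : ℤ => x ^ d + c)^[s] y) ∣
          (((fun x : ℤ => x ^ d + c)^[s] x)^d - ((fun x : ℤ => x ^ d + c)^[s] y)^d) :=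
        sub_dvd_pow_sub_pow _ _ d
      have key := ih.trans h2
      have heq : ((fun x : ℤ => x ^ d + c) ((fun x : ℤ => x ^ d + c)^[s] x)
          - (fun x : ℤ => x ^ d + c) ((fun x : ℤ => x ^ d + c)^[s] y))
          = (((fun x : ℤ => x ^ d + c)^[s] x)^d - ((fun x : ℤ => x ^ d + c)^[s] y)^d) := by
        simp only; ring
      rw [heq]
      exact key

lemma W_dvd_W (d : ℕ) (c : ℤ) {a b : ℕ} (hab : a ∣ b) : W d c a ∣ W d c b := by
  obtain ⟨k, rfl⟩ := hab
  induction k with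
  | zero => simp [W_zero']
  | succ k ih =>
      have h1 : a * (k + 1) = a * k + a := by ring
      rw [h1, W_add]
      have h2 : W d c a ∣ ((fun x : ℤ => x ^ d + c)^[a * k] (W d c a)
          - (fun x : ℤ => x ^ d + c)^[a * k] 0) := by
        simpa using iter_sub_dvd d c (a * k) (W d c a) 0
      have h3 : (fun x : ℤ => x ^ d + c)^[a * k] 0 = W d c (a * k) := rfl
      rw [h3] at h2
      have := dvd_add h2 ih
      simpa using this

lemma abs_add_ge (a b : ℤ) : |a| - |b| ≤ |a + b| := by
  have h := abs_sub_abs_le_abs_sub a (-b)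
  have h2 : a - (-b) = a + b := by ring
  rw [h2, abs_neg] at h
  exact h

lemma abs_W_succ_ge (d : ℕ) (c : ℤ) (n : ℕ) (hd : 2 ≤ d) (h1 : 1 ≤ |W d c n|) :
    |W d c n|^2 - |c| ≤ |W d c (n+1)| := by
  rw [W_succ]
  have h2 : |W d c n|^2 ≤ |W d c n|^d := pow_le_pow_right₀ h1 hd
  have h3 : |(W d c n)^d| = |W d c n|^d := abs_pow _ _
  have h4 := abs_add_ge ((W d c n)^d) c
  rw [h3] at h4
  omega

/-- the growth invariant -/
def Good (d : ℕ) (c : ℤ) (n : ℕ) : Prop :=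
  3 ≤ |W d c n| ∧ |c| + 1 ≤ |W d c n| ∧ (n : ℤ) < |W d c n|

lemma Good.step (d : ℕ) (c : ℤ) (n : ℕ) (hd : 2 ≤ d) (h : Good d c n) : Good d c (n+1) := by
  obtain ⟨h3, hc, hn⟩ := h
  have key := abs_W_succ_ge d c n hd (by omega)
  refine ⟨by nlinarith, by nlinarith, ?_⟩
  have : ((n:ℤ)+1) < |W d c (n+1)| := by nlinarith
  push_cast
  omega

lemma Good.mono (d : ℕ) (c : ℤ) (k : ℕ) (hd : 2 ≤ d) (h : Good d c k) :
    ∀ m, k ≤ m → Good d c m := by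
  intro m hm
  induction m with
  | zero => simpa [Nat.le_zero.mp hm] using h
  | succ m ih =>
      rcases Nat.lt_or_ge k (m+1) with h' | h'
      · exact Good.step d c m hd (ih (by omega))
      · have : k = m + 1 := by omega
        subst this; exact h

lemma abs_W_two_ge (d : ℕ) (c : ℤ) (hd : 2 ≤ d) : |c|^d - |c| ≤ |W d c 2| := by
  rw [W_two, W_one d c hd]
  have h := abs_add_ge (c^d) c
  rw [abs_pow] at h
  exact h

lemma grow_all (d : ℕ) (c : ℤ) (hd : 2 ≤ d)
    (hz : ∀ k, 1 ≤ k → W d c k ≠ 0) (hnot : ¬(c = -2 ∧ d = 2)) :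
    ∀ m : ℕ, 3 ≤ m → (m : ℤ) < |W d c m| := by
  have h1 : W d c 1 = c := W_one d c hd
  -- find a Good starting point k ≤ 3
  have hstart : ∃ k, k ≤ 3 ∧ Good d c k := by
    rcases le_or_gt 3 |c| with hc3 | hc3
    · -- |c| ≥ 3 : Good 2
      refine ⟨2, by omega, ?_⟩
      have h2 := abs_W_two_ge d c hd
      have hp : |c|^2 ≤ |c|^d := pow_le_pow_right₀ (by omega) hd
      refine ⟨by nlinarith, by nlinarith, ?_⟩
      push_cast
      nlinarith
    · -- |c| ≤ 2
      rw [abs_lt] at hc3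
      obtain ⟨hcl, hcr⟩ := hc3
      interval_cases c
      · -- c = -2, so d ≥ 3
        have hd3 : 3 ≤ d := by
          rcases Nat.lt_or_ge d 3 with h | h
          · exfalso; exact hnot ⟨rfl, by omega⟩
          · exact h
        refine ⟨2, by omega, ?_⟩
        have h2 := abs_W_two_ge d (-2) hd
        have hp : (2:ℤ)^3 ≤ 2^d := pow_le_pow_right₀ (by norm_num) hd3
        have habs : |(-2:ℤ)| = 2 := by norm_num
        rw [habs] at h2
        refine ⟨?_, ?_, ?_⟩
        · linarith
        · rw [habs]; linarith
        · push_cast; linarith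
      · -- c = -1
        rcases Nat.even_or_odd d with he | ho
        · exfalso
          apply hz 2 (by omega)
          rw [W_two, W_one d (-1) hd, he.neg_one_pow]
          ring
        · -- d odd, d ≥ 3 : Good 3
          have hd3 : 3 ≤ d := by
            rcases ho with ⟨t, rfl⟩; omega
          refine ⟨3, le_refl 3, ?_⟩
          have h2 : W d (-1) 2 = -2 := by
            rw [W_two, W_one d (-1) hd, ho.neg_one_pow]; ring
          have h3 : W d (-1) 3 = -(2^d) - 1 := by
            rw [W_succ, h2, ho.neg_pow]; ring
          have hp : (2:ℤ)^3 ≤ 2^d := pow_le_pow_right₀ (by norm_num) hd3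
          have habs : |W d (-1) 3| = 2^d + 1 := by
            have hpos : (0:ℤ) < 2^d := pow_pos (by norm_num) d
            rw [h3, abs_of_nonpos (by linarith)]
            ring
          refine ⟨?_, ?_, ?_⟩ <;> rw [habs]
          · linarith
          · norm_num; linarith
          · push_cast; linarith
      · -- c = 0
        exact absurd h1 (by simpa using hz 1 (le_refl 1))
      · -- c = 1 : Good 3
        refine ⟨3, le_refl 3, ?_⟩
        have h2 : W d 1 2 = 2 := by rw [W_two, W_one d 1 hd]; ring
        have h3 : W d 1 3 = 2^d + 1 := by rw [W_succ, h2]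
        have hp : (2:ℤ)^2 ≤ 2^d := pow_le_pow_right₀ (by norm_num) hd
        have habs : |W d 1 3| = 2^d + 1 := by
          rw [h3, abs_of_pos (by positivity)]
        refine ⟨?_, ?_, ?_⟩ <;> rw [habs]
        · linarith
        · norm_num; linarith
        · push_cast; linarith
      · -- c = 2 : Good 2
        refine ⟨2, by omega, ?_⟩
        have h2 : W d 2 2 = 2^d + 2 := by rw [W_two, W_one d 2 hd]
        have hp : (2:ℤ)^2 ≤ 2^d := pow_le_pow_right₀ (by norm_num) hd
        have habs : |W d 2 2| = 2^d + 2 := by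
          rw [h2, abs_of_pos (by positivity)]
        refine ⟨?_, ?_, ?_⟩ <;> rw [habs]
        · linarith
        · norm_num; linarith
        · push_cast; linarith
  obtain ⟨k, hk3, hkgood⟩ := hstart
  intro m hm
  exact (Good.mono d c k hd hkgood m (by omega)).2.2

lemma infinite_of_zero (d : ℕ) (c : ℤ) {k : ℕ} (hk : 1 ≤ k) (h0 : W d c k = 0) :
    (Dset d c).Infinite := by
  have hz : ∀ j, W d c (k * j) = 0 := by
    intro j
    induction j with
    | zero => simp [W_zero']
    | succ j ih =>
        have h1 : k * (j+1) = k * j + k := by ring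
        rw [h1, W_add, h0]
        exact ih
  apply Set.infinite_of_injective_forall_mem (f := fun j : ℕ => k * (j+1))
  · intro a b hab
    simp only at hab
    have := Nat.eq_of_mul_eq_mul_left (by omega : 0 < k) hab
    omega
  · intro j
    refine ⟨by nlinarith, ?_⟩
    rw [hz (j+1)]
    exact dvd_zero _

lemma next_elem (d : ℕ) (c : ℤ) (hg : ∀ m : ℕ, 3 ≤ m → (m : ℤ) < |W d c m|)
    {n : ℕ} (hn3 : 3 ≤ n) (hmem : n ∈ Dset d c) :
    (W d c n).natAbs ∈ Dset d c ∧ n < (W d c n).natAbs := by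
  obtain ⟨hn1, hdvd⟩ := hmem
  have h1 : (n:ℤ) < |W d c n| := hg n hn3
  have habs : |W d c n| = ((W d c n).natAbs : ℤ) := Int.abs_eq_natAbs _
  have hlt : n < (W d c n).natAbs := by rw [habs] at h1; exact_mod_cast h1
  have hna : n ∣ (W d c n).natAbs := by
    have := Int.natAbs_dvd_natAbs.mpr hdvd
    simpa using this
  have hWW : W d c n ∣ W d c ((W d c n).natAbs) := W_dvd_W d c hna
  exact ⟨⟨by omega, (Int.natAbs_dvd.mpr dvd_rfl).trans hWW⟩, hlt⟩

theorem D_infinite_of_ge_three (d : ℕ) (hd : 2 ≤ d) (c : ℤ)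
    (h : ∃ n ∈ Dset d c, 3 ≤ n) : (Dset d c).Infinite := by
  obtain ⟨n₀, hn₀mem, hn₀3⟩ := h
  by_cases hz : ∃ k, 1 ≤ k ∧ W d c k = 0
  · obtain ⟨k, hk, h0⟩ := hz
    exact infinite_of_zero d c hk h0
  push_neg at hz
  by_cases hsp : c = -2 ∧ d = 2
  · -- degenerate case : W m = 2 for m ≥ 2, contradiction
    exfalso
    obtain ⟨hc, hdd⟩ := hsp
    subst hc; subst hdd
    have hW : ∀ m, W 2 (-2) (m + 2) = 2 := by
      intro m
      induction m with
      | zero =>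
          rw [W_two, W_one 2 (-2) (le_refl 2)]
          norm_num
      | succ m ih =>
          have : m + 1 + 2 = (m + 2) + 1 := by ring
          rw [this, W_succ, ih]
          norm_num
    obtain ⟨hn₀1, hn₀dvd⟩ := hn₀mem
    have h2 : n₀ - 2 + 2 = n₀ := by omega
    rw [← h2, hW (n₀ - 2)] at hn₀dvd
    have := Int.le_of_dvd (by norm_num) hn₀dvd
    omega
  -- growth case
  have hg := grow_all d c hd hz hsp
  have key : ∀ N, ∃ m, m ∈ Dset d c ∧ 3 ≤ m ∧ N < m := by
    intro N
    induction N with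
    | zero => exact ⟨n₀, hn₀mem, hn₀3, by omega⟩
    | succ N ih =>
        obtain ⟨m, hm, h3, hN⟩ := ih
        rcases Nat.lt_or_ge (N+1) m with h' | h'
        · exact ⟨m, hm, h3, h'⟩
        · obtain ⟨hmem', hlt'⟩ := next_elem d c hg h3 hm
          exact ⟨(W d c m).natAbs, hmem', by omega, by omega⟩
  apply Set.infinite_of_not_bddAbove
  rw [not_bddAbove_iff]
  intro x
  obtain ⟨m, hm, _, hx⟩ := key x
  exact ⟨m, hm, hx⟩
end

section
/- Let p be a prime and let φ(x) = x^d + c with c, d ∈ ℤ and d ≥ 2. Then p divides W_p = φ^p(0) if and only if, for the induced map φ : ℤ/pℤ → ℤ/pℤ, either 0 is a fixed point of φ modulo p, or φ is a permutation of ℤ/pℤ consisting of a single cycle of length p. -/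
private lemma cast_W (p : ℕ) (d : ℕ) (c : ℤ) (n : ℕ) :
    ((W d c n : ℤ) : ZMod p) = (fun x : ZMod p => x ^ d + (c : ZMod p))^[n] 0 := by
  induction n with
  | zero => simp [W]
  | succ n ih =>
      have h1 : W d c (n + 1) = (W d c n) ^ d + c := by
        simp [W, Function.iterate_succ_apply']
      rw [h1, Function.iterate_succ_apply']
      push_cast
      rw [ih]

private lemma orbit_ncard {α : Type*} (f : α → α) (x : α)
    (h : x ∈ Function.periodicPts f) :
    Set.ncard (Set.range fun k : ℕ => f^[k] x) = Function.minimalPeriod f x := by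
  have ht : 0 < Function.minimalPeriod f x :=
    Function.minimalPeriod_pos_of_mem_periodicPts h
  have hrange : (Set.range fun k : ℕ => f^[k] x)
      = (fun k : ℕ => f^[k] x) '' Set.Iio (Function.minimalPeriod f x) := by
    ext y
    constructor
    · rintro ⟨k, rfl⟩
      exact ⟨k % _, Nat.mod_lt _ ht, Function.iterate_mod_minimalPeriod_eq⟩
    · rintro ⟨k, _, rfl⟩; exact ⟨k, rfl⟩
  rw [hrange, Set.ncard_image_of_injOn Function.iterate_injOn_Iio_minimalPeriod,
    ← Finset.coe_range, Set.ncard_coe_finset, Finset.card_range]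

/-- For a prime `p`, `p ∣ W_p` iff modulo `p` either `0` is a fixed point of
`x ↦ x^d + c`, or `x ↦ x^d + c` is a permutation of `ℤ/pℤ` consisting of a single
cycle of length `p` (a bijection under which every orbit has exactly `p` elements). -/
theorem p_dvd_Wp_iff (p : ℕ) (hp : p.Prime) (d : ℕ) (hd : 2 ≤ d) (c : ℤ) :
    (p : ℤ) ∣ W d c p ↔
      ((0 : ZMod p) ^ d + (c : ZMod p) = 0 ∨
        (Function.Bijective (fun x : ZMod p => x ^ d + (c : ZMod p)) ∧
          ∀ x : ZMod p,
            Set.ncard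
              (Set.range fun k : ℕ => (fun y : ZMod p => y ^ d + (c : ZMod p))^[k] x)
              = p)) := by
  haveI : Fact p.Prime := ⟨hp⟩
  set f : ZMod p → ZMod p := fun x => x ^ d + (c : ZMod p) with hf
  have hmain : (p : ℤ) ∣ W d c p ↔ f^[p] 0 = 0 := by
    rw [← ZMod.intCast_zmod_eq_zero_iff_dvd, cast_W]
  rw [hmain]
  constructor
  · intro h
    by_cases h0 : f 0 = 0
    · exact Or.inl h0
    right
    have hper : Function.IsPeriodicPt f p 0 := h
    have ht : Function.minimalPeriod f 0 = p := by
      rcases hp.eq_one_or_self_of_dvd _ hper.minimalPeriod_dvd with h1 | h1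
      · exact absurd (Function.minimalPeriod_eq_one_iff_isFixedPt.mp h1) h0
      · exact h1
    -- g : Fin p → ZMod p is injective hence bijective
    have ginj : Function.Injective (fun k : Fin p => f^[(k : ℕ)] 0) := by
      intro a b hab
      have := Function.iterate_injOn_Iio_minimalPeriod (f := f) (x := 0)
        (by rw [ht]; exact Set.mem_Iio.mpr a.isLt)
        (by rw [ht]; exact Set.mem_Iio.mpr b.isLt) hab
      exact Fin.ext this
    have gbij : Function.Bijective (fun k : Fin p => f^[(k : ℕ)] 0) := by
      refine (Fintype.bijective_iff_injective_and_card _).mpr ⟨ginj, ?_⟩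
      simp [ZMod.card]
    have hall : ∀ x : ZMod p, ∃ k : ℕ, k < p ∧ f^[k] 0 = x := by
      intro x
      obtain ⟨k, hk⟩ := gbij.surjective x
      exact ⟨(k : ℕ), k.isLt, hk⟩
    have hp1 : p = (p - 1) + 1 := (Nat.succ_pred_eq_of_pos hp.pos).symm
    have hsurj : Function.Surjective f := by
      intro x
      obtain ⟨k, hk, hkx⟩ := hall x
      rcases Nat.eq_zero_or_pos k with rfl | hkpos
      · have hstep : f^[p - 1 + 1] 0 = f (f^[p - 1] 0) :=
          Function.iterate_succ_apply' f (p - 1) 0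
        rw [show p - 1 + 1 = p from hp1.symm] at hstep
        exact ⟨f^[p - 1] 0, by rw [← hstep, h]; exact hkx⟩
      · have hstep : f^[k - 1 + 1] 0 = f (f^[k - 1] 0) :=
          Function.iterate_succ_apply' f (k - 1) 0
        rw [show k - 1 + 1 = k from Nat.succ_pred_eq_of_pos hkpos] at hstep
        exact ⟨f^[k - 1] 0, by rw [← hstep]; exact hkx⟩
    refine ⟨Finite.surjective_iff_bijective.mp hsurj, ?_⟩
    intro x
    have hrange : (Set.range fun k : ℕ => f^[k] x) = Set.univ := by
      obtain ⟨k, hk, rfl⟩ := hall x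
      refine Set.eq_univ_of_forall fun y => ?_
      obtain ⟨m, hm, rfl⟩ := hall y
      refine ⟨m + p - k, ?_⟩
      have hadd : m + p - k + k = m + p := Nat.sub_add_cancel
        (le_trans (Nat.le_of_lt hk) (Nat.le_add_left p m))
      calc f^[m + p - k] (f^[k] 0) = f^[m + p - k + k] 0 := by
              rw [Function.iterate_add_apply]
        _ = f^[m + p] 0 := by rw [hadd]
        _ = f^[m] (f^[p] 0) := Function.iterate_add_apply f m p 0
        _ = f^[m] 0 := by rw [h]
    rw [hrange, Set.ncard_univ, Nat.card_zmod]
  · rintro (h0 | ⟨hbij, horb⟩)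
    · exact (show Function.IsFixedPt f 0 from h0).iterate p
    · -- 0 is a periodic point
      have hex : ∃ a b : ℕ, a ≠ b ∧ f^[a] 0 = f^[b] 0 :=
        Finite.exists_ne_map_eq_of_infinite (fun k : ℕ => f^[k] 0)
      obtain ⟨a, b, hab, heq⟩ := hex
      wlog hlt : a < b generalizing a b
      · exact this b a hab.symm heq.symm (hab.lt_or_gt.resolve_left hlt)
      have hperpt : 0 ∈ Function.periodicPts f := by
        refine ⟨b - a, Nat.sub_pos_of_lt hlt, ?_⟩
        have hinj : Function.Injective (f^[a]) := Function.Injective.iterate hbij.injective a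
        apply hinj
        show f^[a] (f^[b-a] 0) = f^[a] 0
        rw [← Function.iterate_add_apply, Nat.add_sub_cancel' (Nat.le_of_lt hlt)]
        exact heq.symm ▸ rfl
      have := orbit_ncard f 0 hperpt
      have ht : Function.minimalPeriod f 0 = p := by
        rw [← this]; exact (horb 0).symm ▸ (horb 0)
      have := Function.iterate_minimalPeriod (f := f) (x := 0)
      rwa [ht] at this
end
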